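/- Let (A,B) and (A′,B′) be as in the dual column simulation, let 0 ≤ ε < 1/(600·n²), and let (x*,y*) be an ε-WSNE of (A′,B′). Then the renormalizations defining the translated profile (x,y) are valid (the vectors x′ and y″ have positive sums), and (x,y) is a (1200·n²·ε)-WSNE of (A,B). -/

import Mathlib

open Finset
open scoped Classical

/-- `(x, y)` is an `ε`-well-supported Nash equilibrium of the bimatrix game with
`nr` rows, `nc` columns and payoff matrices `A` (row player) and `B` (column player). -/
def IsWSNE (nr nc : ℕ) (A B : ℕ → ℕ → ℝ) (x y : ℕ → ℝ) (ε : ℝ) : Prop :=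
  (∀ i, 0 ≤ x i) ∧ (∀ i, nr ≤ i → x i = 0) ∧ (∑ i ∈ range nr, x i = 1) ∧
  (∀ j, 0 ≤ y j) ∧ (∀ j, nc ≤ j → y j = 0) ∧ (∑ j ∈ range nc, y j = 1) ∧
  (∀ i < nr, 0 < x i → ∀ i' < nr,
    ∑ j ∈ range nc, A i j * y j ≥ ∑ j ∈ range nc, A i' j * y j - ε) ∧
  (∀ j < nc, 0 < y j → ∀ j' < nc,
    ∑ i ∈ range nr, x i * B i j ≥ ∑ i ∈ range nr, x i * B i j' - ε)

/-- The column requirement of a stage 2 game: at most four non-zero entries, all in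
`{1,2}`, with at most one `2`. -/
def Stage2Col (nr : ℕ) (col : ℕ → ℝ) : Prop :=
  (∀ i < nr, col i ∈ ({0, 1, 2} : Set ℝ)) ∧
  ((range nr).filter fun i => col i ≠ 0).card ≤ 4 ∧
  ((range nr).filter fun i => col i = 2).card ≤ 1

/-- The row requirement of a stage 2 game: either (i) at most three entries `1`,
or (ii) a single `2` with at most one `1`, or (iii) exactly two entries `2` (all
remaining entries are `0`). -/
def Stage2Row (nc : ℕ) (row : ℕ → ℝ) : Prop :=
  ((∀ j < nc, row j = 0 ∨ row j = 1) ∧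
    ((range nc).filter fun j => row j = 1).card ≤ 3) ∨
  ((((range nc).filter fun j => row j = 2).card = 1) ∧
    ((range nc).filter fun j => row j = 1).card ≤ 1 ∧
    ∀ j < nc, row j ∈ ({0, 1, 2} : Set ℝ)) ∨
  ((((range nc).filter fun j => row j = 2).card = 2) ∧
    ∀ j < nc, row j ∈ ({0, 2} : Set ℝ))

/-- `(A, B)` (with `nr` rows and `nc` columns) is a stage 2 game. -/
def Stage2Game (nr nc : ℕ) (A B : ℕ → ℕ → ℝ) : Prop :=
  (∀ j < nc, Stage2Col nr (fun i => A i j)) ∧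
  (∀ i < nr, Stage2Row nc (fun j => A i j)) ∧
  (∀ i < nr, Stage2Col nc (fun j => B i j)) ∧
  (∀ j < nc, Stage2Row nr (fun i => B i j)) ∧
  (∀ i < nr, ((range nc).filter fun j => A i j = 2).card = 2 →
    ∀ j < nc, A i j = 2 → ((range nr).filter fun r => A r j = 1).card = 1) ∧
  (∀ j < nc, ((range nr).filter fun i => B i j = 2).card = 2 →
    ∀ i < nr, B i j = 2 → ((range nc).filter fun c => B i c = 1).card = 1)

/-- Input assumptions of the dual column simulation: `(A, B)` is a stage 2 game
with at most `n` rows and columns, entries in `[0,2]`, every row and column with an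
entry `≥ 1`, whose rows with exactly two `2`s are exactly the rows `i < k`, with
row `i < k` having its two `2`s in columns `2i` and `2i+1`, and with column `2i`
(resp. `2i+1`) containing exactly one entry `1`. -/
def DcsInput (n nr nc k : ℕ) (A B : ℕ → ℕ → ℝ) : Prop :=
  nr ≤ n ∧ nc ≤ n ∧ k ≤ nr ∧ 2*k ≤ nc ∧
  Stage2Game nr nc A B ∧
  (∀ i < nr, ∀ j < nc, 0 ≤ A i j ∧ A i j ≤ 2) ∧
  (∀ i < nr, ∀ j < nc, 0 ≤ B i j ∧ B i j ≤ 2) ∧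
  (∀ i < nr, ∃ j < nc, 1 ≤ A i j) ∧ (∀ j < nc, ∃ i < nr, 1 ≤ A i j) ∧
  (∀ i < nr, ∃ j < nc, 1 ≤ B i j) ∧ (∀ j < nc, ∃ i < nr, 1 ≤ B i j) ∧
  (∀ i < k, A i (2*i) = 2 ∧ A i (2*i+1) = 2 ∧
    (∀ j < nc, A i j = 2 → j = 2*i ∨ j = 2*i+1)) ∧
  (∀ i, k ≤ i → i < nr → ((range nc).filter fun j => A i j = 2).card ≠ 2) ∧
  (∀ i < k, ((range nr).filter fun r => A r (2*i) = 1).card = 1 ∧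
            ((range nr).filter fun r => A r (2*i+1) = 1).card = 1)

/-- The row player's payoff matrix `A'` of the dual column simulation.  It has
`4k + nr` rows and `3k + nc` columns.  For `i < k` the blocks `(rb₁ⁱ, cb₁ⁱ)` and
`(rb₂ⁱ, cb₁ⁱ)` both equal `S = [[1,0,0],[0,1,1]]`, the blocks `(rb₁ⁱ, cb₂ⁱ)` and
`(rb₂ⁱ, cb₃ⁱ)` are all ones, and the block `(rb_e, cb₁ⁱ)` equals
`encode(A_{2i}, A_{2i+1})` (a `2` in row `i` of the first column, a `1` in the
second (resp. third) column in the unique row where column `2i` (resp. `2i+1`) of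
`A` equals `1`).  Columns `c ≥ 5k` restricted to `rb_e` equal columns
`A_{2k}, …, A_{nc-1}`; all other entries are `0`. -/
noncomputable def dcsA (k : ℕ) (A : ℕ → ℕ → ℝ) : ℕ → ℕ → ℝ := fun r c =>
  if r < 4*k then
    if c = 5*(r/4) then (if r % 2 = 0 then 1 else 0)
    else if c = 5*(r/4) + 1 ∨ c = 5*(r/4) + 2 then (if r % 2 = 1 then 1 else 0)
    else if c = 5*(r/4) + 3 then (if r % 4 < 2 then 1 else 0)
    else if c = 5*(r/4) + 4 then (if 2 ≤ r % 4 then 1 else 0)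
    else 0
  else
    if c < 5*k then
      (if c % 5 = 0 then (if r - 4*k = c/5 then 2 else 0)
       else if c % 5 = 1 then (if A (r - 4*k) (2*(c/5)) = 1 then 1 else 0)
       else if c % 5 = 2 then (if A (r - 4*k) (2*(c/5)+1) = 1 then 1 else 0)
       else 0)
    else A (r - 4*k) (c - 3*k)

/-- The column player's payoff matrix `B'` of the dual column simulation: for
`i < k` the block `(rb₁ⁱ, cb₁ⁱ)` equals `T₁ = [[0,1,0],[1,0,0]]`, the block
`(rb₂ⁱ, cb₁ⁱ)` equals `T₂ = [[0,0,1],[1,0,0]]`, the block `(rb_e, cb₂ⁱ)` equals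
column `B_{2i}` and the block `(rb_e, cb₃ⁱ)` equals column `B_{2i+1}`.  Columns
`c ≥ 5k` restricted to `rb_e` equal columns `B_{2k}, …, B_{nc-1}`; all other
entries are `0`. -/
noncomputable def dcsB (k : ℕ) (B : ℕ → ℕ → ℝ) : ℕ → ℕ → ℝ := fun r c =>
  if r < 4*k then
    if r % 4 = 0 then (if c = 5*(r/4) + 1 then 1 else 0)
    else if r % 4 = 2 then (if c = 5*(r/4) + 2 then 1 else 0)
    else (if c = 5*(r/4) then 1 else 0)
  else
    if c < 5*k then
      (if c % 5 = 3 then B (r - 4*k) (2*(c/5))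
       else if c % 5 = 4 then B (r - 4*k) (2*(c/5)+1)
       else 0)
    else B (r - 4*k) (c - 3*k)

/-- The (un-normalized) intermediate translated column strategy `y'` of the dual
column simulation. -/
noncomputable def dcsYp (k : ℕ) (ystar : ℕ → ℝ) : ℕ → ℝ := fun j =>
  if j / 2 < k then
    (if j % 2 = 0 then ystar (5*(j/2) + 1) else ystar (5*(j/2) + 2))
  else ystar (3*k + j)

/-- The (un-normalized) translated column strategy `y''` of the dual column
simulation: entries `y'_j` with `⌊j/2⌋ < k` and `y'_j < 3ε` are set to `0`. -/
noncomputable def dcsYpp (k : ℕ) (ε : ℝ) (ystar : ℕ → ℝ) : ℕ → ℝ := fun j =>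
  if j / 2 < k ∧ dcsYp k ystar j < 3 * ε then 0 else dcsYp k ystar j

namespace DCSproof



lemma sum_range5 (k : ℕ) (f : ℕ → ℝ) :
    ∑ c ∈ range (5*k), f c
      = ∑ i ∈ range k, (f (5*i) + f (5*i+1) + f (5*i+2) + f (5*i+3) + f (5*i+4)) := by
  induction k with
  | zero => simp
  | succ k ih =>
    rw [Finset.sum_range_succ (fun i => f (5*i) + f (5*i+1) + f (5*i+2) + f (5*i+3) + f (5*i+4)), ← ih,
      show 5*(k+1) = 5*k+1+1+1+1+1 by ring,
      Finset.sum_range_succ, Finset.sum_range_succ, Finset.sum_range_succ,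
      Finset.sum_range_succ, Finset.sum_range_succ]
    ring

lemma sum_range4 (k : ℕ) (f : ℕ → ℝ) :
    ∑ c ∈ range (4*k), f c
      = ∑ i ∈ range k, (f (4*i) + f (4*i+1) + f (4*i+2) + f (4*i+3)) := by
  induction k with
  | zero => simp
  | succ k ih =>
    rw [Finset.sum_range_succ (fun i => f (4*i) + f (4*i+1) + f (4*i+2) + f (4*i+3)), ← ih,
      show 4*(k+1) = 4*k+1+1+1+1 by ring,
      Finset.sum_range_succ, Finset.sum_range_succ, Finset.sum_range_succ,
      Finset.sum_range_succ]
    ring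

lemma sum_range2 (k : ℕ) (f : ℕ → ℝ) :
    ∑ c ∈ range (2*k), f c = ∑ i ∈ range k, (f (2*i) + f (2*i+1)) := by
  induction k with
  | zero => simp
  | succ k ih =>
    rw [Finset.sum_range_succ (fun i => f (2*i) + f (2*i+1)), ← ih,
      show 2*(k+1) = 2*k+1+1 by ring, Finset.sum_range_succ, Finset.sum_range_succ]
    ring

lemma split_tail (a m : ℕ) (f : ℕ → ℝ) :
    ∑ c ∈ range (a+m), f c = ∑ c ∈ range a, f c + ∑ t ∈ range m, f (a+t) := by
  have h := Finset.sum_Ico_consecutive f (Nat.zero_le a) (Nat.le_add_right a m)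
  rw [← Finset.range_eq_Ico, ← Finset.range_eq_Ico] at h
  rw [← h, Finset.sum_Ico_eq_sum_range, Nat.add_sub_cancel_left]

lemma split5 (k m : ℕ) (f : ℕ → ℝ) :
    ∑ c ∈ range (5*k+m), f c
      = ∑ i ∈ range k, (f (5*i) + f (5*i+1) + f (5*i+2) + f (5*i+3) + f (5*i+4))
        + ∑ t ∈ range m, f (5*k+t) := by
  rw [split_tail, sum_range5]

lemma split4 (k m : ℕ) (f : ℕ → ℝ) :
    ∑ c ∈ range (4*k+m), f c
      = ∑ i ∈ range k, (f (4*i) + f (4*i+1) + f (4*i+2) + f (4*i+3))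
        + ∑ t ∈ range m, f (4*k+t) := by
  rw [split_tail, sum_range4]

lemma split2 (k m : ℕ) (f : ℕ → ℝ) :
    ∑ c ∈ range (2*k+m), f c
      = ∑ i ∈ range k, (f (2*i) + f (2*i+1)) + ∑ t ∈ range m, f (2*k+t) := by
  rw [split_tail, sum_range2]

lemma indic_sum (k r : ℕ) (g : ℕ → ℝ) :
    ∑ i ∈ range k, (if r = i then (2:ℝ) else 0) * g i
      = if r < k then 2 * g r else 0 := by
  have h : ∀ i ∈ range k, (if r = i then (2:ℝ) else 0) * g i
      = if r = i then 2 * g i else 0 := by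
    intro i _; split_ifs <;> simp
  rw [Finset.sum_congr rfl h, Finset.sum_ite_eq (range k) r (fun i => 2 * g i)]
  simp [Finset.mem_range]


lemma sum_ind1 (N a : ℕ) (ha : a < N) (y F : ℕ → ℝ)
    (h : ∀ c < N, F c = (if c = a then (1:ℝ) else 0)) :
    ∑ c ∈ range N, y c * F c = y a := by
  have key : ∀ c ∈ range N, y c * F c = (if c = a then y c else 0) := by
    intro c hc; rw [h c (mem_range.mp hc)]; split_ifs <;> ring
  rw [Finset.sum_congr rfl key, Finset.sum_ite_eq' (range N) a y,
    if_pos (Finset.mem_range.mpr ha)]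

lemma sum_ind2 (N a b : ℕ) (ha : a < N) (hb : b < N) (hab : a ≠ b) (y F : ℕ → ℝ)
    (h : ∀ c < N, F c = (if c = a then (1:ℝ) else 0) + (if c = b then 1 else 0)) :
    ∑ c ∈ range N, y c * F c = y a + y b := by
  have key : ∀ c ∈ range N, y c * F c
      = (if c = a then y c else 0) + (if c = b then y c else 0) := by
    intro c hc; rw [h c (mem_range.mp hc)]; split_ifs <;> first | ring | omega
  rw [Finset.sum_congr rfl key, Finset.sum_add_distrib,
    Finset.sum_ite_eq' (range N) a y, Finset.sum_ite_eq' (range N) b y,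
    if_pos (Finset.mem_range.mpr ha), if_pos (Finset.mem_range.mpr hb)]

lemma sum_ind3 (N a b d : ℕ) (ha : a < N) (hb : b < N) (hd : d < N) (y F : ℕ → ℝ)
    (h : ∀ c < N, F c = (if c = a then (1:ℝ) else 0) + (if c = b then 1 else 0)
      + (if c = d then 1 else 0)) :
    ∑ c ∈ range N, y c * F c = y a + y b + y d := by
  have key : ∀ c ∈ range N, y c * F c
      = (if c = a then y c else 0) + (if c = b then y c else 0)
        + (if c = d then y c else 0) := by
    intro c hc; rw [h c (mem_range.mp hc)]; split_ifs <;> ring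
  rw [Finset.sum_congr rfl key, Finset.sum_add_distrib, Finset.sum_add_distrib,
    Finset.sum_ite_eq' (range N) a y, Finset.sum_ite_eq' (range N) b y,
    Finset.sum_ite_eq' (range N) d y,
    if_pos (Finset.mem_range.mpr ha), if_pos (Finset.mem_range.mpr hb),
    if_pos (Finset.mem_range.mpr hd)]

-- row payoffs, gadget rows (note ∑ dcsA * y, so use mul_comm form)
lemma sum_ind1' (N a : ℕ) (ha : a < N) (y F : ℕ → ℝ)
    (h : ∀ c < N, F c = (if c = a then (1:ℝ) else 0)) :
    ∑ c ∈ range N, F c * y c = y a := by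
  rw [Finset.sum_congr rfl (fun c _ => mul_comm (F c) (y c))]
  exact sum_ind1 N a ha y F h

lemma sum_ind2' (N a b : ℕ) (ha : a < N) (hb : b < N) (hab : a ≠ b) (y F : ℕ → ℝ)
    (h : ∀ c < N, F c = (if c = a then (1:ℝ) else 0) + (if c = b then 1 else 0)) :
    ∑ c ∈ range N, F c * y c = y a + y b := by
  rw [Finset.sum_congr rfl (fun c _ => mul_comm (F c) (y c))]
  exact sum_ind2 N a b ha hb hab y F h

lemma sum_ind3' (N a b d : ℕ) (ha : a < N) (hb : b < N) (hd : d < N) (y F : ℕ → ℝ)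
    (h : ∀ c < N, F c = (if c = a then (1:ℝ) else 0) + (if c = b then 1 else 0)
      + (if c = d then 1 else 0)) :
    ∑ c ∈ range N, F c * y c = y a + y b + y d := by
  rw [Finset.sum_congr rfl (fun c _ => mul_comm (F c) (y c))]
  exact sum_ind3 N a b d ha hb hd y F h

lemma RA_g0 (k nc : ℕ) (A : ℕ → ℕ → ℝ) (y : ℕ → ℝ) (h2k : 2*k ≤ nc) {i : ℕ} (hi : i < k) :
    ∑ c ∈ range (3*k+nc), dcsA k A (4*i) c * y c = y (5*i) + y (5*i+3) := by
  apply sum_ind2' _ _ _ (by omega) (by omega) (by omega)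
  intro c _
  simp only [dcsA, if_pos (show 4*i < 4*k by omega)]
  split_ifs <;> first | omega | norm_num

lemma RA_g1 (k nc : ℕ) (A : ℕ → ℕ → ℝ) (y : ℕ → ℝ) (h2k : 2*k ≤ nc) {i : ℕ} (hi : i < k) :
    ∑ c ∈ range (3*k+nc), dcsA k A (4*i+1) c * y c = y (5*i+1) + y (5*i+2) + y (5*i+3) := by
  apply sum_ind3' _ _ _ _ (by omega) (by omega) (by omega)
  intro c _
  simp only [dcsA, if_pos (show 4*i+1 < 4*k by omega)]
  split_ifs <;> first | omega | norm_num

lemma RA_g2 (k nc : ℕ) (A : ℕ → ℕ → ℝ) (y : ℕ → ℝ) (h2k : 2*k ≤ nc) {i : ℕ} (hi : i < k) :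
    ∑ c ∈ range (3*k+nc), dcsA k A (4*i+2) c * y c = y (5*i) + y (5*i+4) := by
  apply sum_ind2' _ _ _ (by omega) (by omega) (by omega)
  intro c _
  simp only [dcsA, if_pos (show 4*i+2 < 4*k by omega)]
  split_ifs <;> first | omega | norm_num

lemma RA_g3 (k nc : ℕ) (A : ℕ → ℕ → ℝ) (y : ℕ → ℝ) (h2k : 2*k ≤ nc) {i : ℕ} (hi : i < k) :
    ∑ c ∈ range (3*k+nc), dcsA k A (4*i+3) c * y c = y (5*i+1) + y (5*i+2) + y (5*i+4) := by
  apply sum_ind3' _ _ _ _ (by omega) (by omega) (by omega)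
  intro c _
  simp only [dcsA, if_pos (show 4*i+3 < 4*k by omega)]
  split_ifs <;> first | omega | norm_num

lemma dcsA_e0 (k : ℕ) (A : ℕ → ℕ → ℝ) (r i : ℕ) (hi : i < k) :
    dcsA k A (4*k+r) (5*i) = if r = i then 2 else 0 := by
  simp only [dcsA, if_neg (show ¬ 4*k+r < 4*k by omega), if_pos (show 5*i < 5*k by omega),
    if_pos (show (5*i) % 5 = 0 by omega), show 4*k+r-4*k = r by omega,
    show (5*i)/5 = i by omega]

lemma dcsA_e1 (k : ℕ) (A : ℕ → ℕ → ℝ) (r i : ℕ) (hi : i < k) :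
    dcsA k A (4*k+r) (5*i+1) = if A r (2*i) = 1 then 1 else 0 := by
  simp only [dcsA, if_neg (show ¬ 4*k+r < 4*k by omega), if_pos (show 5*i+1 < 5*k by omega),
    if_neg (show ¬ (5*i+1) % 5 = 0 by omega), if_pos (show (5*i+1) % 5 = 1 by omega),
    show 4*k+r-4*k = r by omega, show (5*i+1)/5 = i by omega]

lemma dcsA_e2 (k : ℕ) (A : ℕ → ℕ → ℝ) (r i : ℕ) (hi : i < k) :
    dcsA k A (4*k+r) (5*i+2) = if A r (2*i+1) = 1 then 1 else 0 := by
  simp only [dcsA, if_neg (show ¬ 4*k+r < 4*k by omega), if_pos (show 5*i+2 < 5*k by omega),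
    if_neg (show ¬ (5*i+2) % 5 = 0 by omega), if_neg (show ¬ (5*i+2) % 5 = 1 by omega),
    if_pos (show (5*i+2) % 5 = 2 by omega),
    show 4*k+r-4*k = r by omega, show (5*i+2)/5 = i by omega]

lemma dcsA_e3 (k : ℕ) (A : ℕ → ℕ → ℝ) (r i : ℕ) (hi : i < k) :
    dcsA k A (4*k+r) (5*i+3) = 0 := by
  simp only [dcsA, if_neg (show ¬ 4*k+r < 4*k by omega), if_pos (show 5*i+3 < 5*k by omega),
    if_neg (show ¬ (5*i+3) % 5 = 0 by omega), if_neg (show ¬ (5*i+3) % 5 = 1 by omega),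
    if_neg (show ¬ (5*i+3) % 5 = 2 by omega)]

lemma dcsA_e4 (k : ℕ) (A : ℕ → ℕ → ℝ) (r i : ℕ) (hi : i < k) :
    dcsA k A (4*k+r) (5*i+4) = 0 := by
  simp only [dcsA, if_neg (show ¬ 4*k+r < 4*k by omega), if_pos (show 5*i+4 < 5*k by omega),
    if_neg (show ¬ (5*i+4) % 5 = 0 by omega), if_neg (show ¬ (5*i+4) % 5 = 1 by omega),
    if_neg (show ¬ (5*i+4) % 5 = 2 by omega)]

lemma dcsA_ext (k : ℕ) (A : ℕ → ℕ → ℝ) (r t : ℕ) :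
    dcsA k A (4*k+r) (5*k+t) = A r (2*k+t) := by
  simp only [dcsA, if_neg (show ¬ 4*k+r < 4*k by omega), if_neg (show ¬ 5*k+t < 5*k by omega),
    show 4*k+r-4*k = r by omega, show 5*k+t-3*k = 2*k+t by omega]

lemma RA_enc (k nc r : ℕ) (A : ℕ → ℕ → ℝ) (y : ℕ → ℝ) (h2k : 2*k ≤ nc) :
    ∑ c ∈ range (3*k+nc), dcsA k A (4*k+r) c * y c
      = (∑ i ∈ range k, ((if r = i then (2:ℝ) else 0) * y (5*i)
          + (if A r (2*i) = 1 then (1:ℝ) else 0) * y (5*i+1)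
          + (if A r (2*i+1) = 1 then (1:ℝ) else 0) * y (5*i+2)))
        + ∑ t ∈ range (nc-2*k), A r (2*k+t) * y (5*k+t) := by
  rw [show 3*k+nc = 5*k+(nc-2*k) by omega, split5]
  congr 1
  · apply Finset.sum_congr rfl
    intro i hi
    have hik := mem_range.mp hi
    rw [dcsA_e0 k A r i hik, dcsA_e1 k A r i hik, dcsA_e2 k A r i hik,
      dcsA_e3 k A r i hik, dcsA_e4 k A r i hik]
    ring
  · exact Finset.sum_congr rfl (fun t _ => by rw [dcsA_ext])

lemma CB_g0 (k nr : ℕ) (B : ℕ → ℕ → ℝ) (x : ℕ → ℝ) {i : ℕ} (hi : i < k) :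
    ∑ r ∈ range (4*k+nr), x r * dcsB k B r (5*i) = x (4*i+1) + x (4*i+3) := by
  apply sum_ind2 _ _ _ (by omega) (by omega) (by omega)
  intro r _
  simp only [dcsB]
  split_ifs <;> first | omega | norm_num

lemma CB_g1 (k nr : ℕ) (B : ℕ → ℕ → ℝ) (x : ℕ → ℝ) {i : ℕ} (hi : i < k) :
    ∑ r ∈ range (4*k+nr), x r * dcsB k B r (5*i+1) = x (4*i) := by
  apply sum_ind1 _ _ (by omega)
  intro r _
  simp only [dcsB]
  split_ifs <;> first | omega | norm_num

lemma CB_g2 (k nr : ℕ) (B : ℕ → ℕ → ℝ) (x : ℕ → ℝ) {i : ℕ} (hi : i < k) :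
    ∑ r ∈ range (4*k+nr), x r * dcsB k B r (5*i+2) = x (4*i+2) := by
  apply sum_ind1 _ _ (by omega)
  intro r _
  simp only [dcsB]
  split_ifs <;> first | omega | norm_num

lemma dcsB_gz (k : ℕ) (B : ℕ → ℕ → ℝ) (r c : ℕ) (hr : r < 4*k)
    (hc : ∀ s < k, c ≠ 5*s ∧ c ≠ 5*s+1 ∧ c ≠ 5*s+2) : dcsB k B r c = 0 := by
  have h := hc (r/4) (by omega)
  simp only [dcsB, if_pos hr]
  split_ifs <;> first | omega | norm_num

lemma dcsB_e3 (k : ℕ) (B : ℕ → ℕ → ℝ) (t i : ℕ) (hi : i < k) :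
    dcsB k B (4*k+t) (5*i+3) = B t (2*i) := by
  simp only [dcsB, if_neg (show ¬ 4*k+t < 4*k by omega), if_pos (show 5*i+3 < 5*k by omega),
    if_pos (show (5*i+3) % 5 = 3 by omega), show 4*k+t-4*k = t by omega,
    show (5*i+3)/5 = i by omega]

lemma dcsB_e4 (k : ℕ) (B : ℕ → ℕ → ℝ) (t i : ℕ) (hi : i < k) :
    dcsB k B (4*k+t) (5*i+4) = B t (2*i+1) := by
  simp only [dcsB, if_neg (show ¬ 4*k+t < 4*k by omega), if_pos (show 5*i+4 < 5*k by omega),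
    if_neg (show ¬ (5*i+4) % 5 = 3 by omega), if_pos (show (5*i+4) % 5 = 4 by omega),
    show 4*k+t-4*k = t by omega, show (5*i+4)/5 = i by omega]

lemma dcsB_ext (k : ℕ) (B : ℕ → ℕ → ℝ) (t j : ℕ) (hj : 2*k ≤ j) :
    dcsB k B (4*k+t) (3*k+j) = B t j := by
  simp only [dcsB, if_neg (show ¬ 4*k+t < 4*k by omega), if_neg (show ¬ 3*k+j < 5*k by omega),
    show 4*k+t-4*k = t by omega, show 3*k+j-3*k = j by omega]

lemma CB_o3 (k nr : ℕ) (B : ℕ → ℕ → ℝ) (x : ℕ → ℝ) {i : ℕ} (hi : i < k) :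
    ∑ r ∈ range (4*k+nr), x r * dcsB k B r (5*i+3)
      = ∑ t ∈ range nr, x (4*k+t) * B t (2*i) := by
  rw [split4]
  have h1 : ∑ i' ∈ range k, (x (4*i') * dcsB k B (4*i') (5*i+3)
      + x (4*i'+1) * dcsB k B (4*i'+1) (5*i+3)
      + x (4*i'+2) * dcsB k B (4*i'+2) (5*i+3)
      + x (4*i'+3) * dcsB k B (4*i'+3) (5*i+3)) = 0 := by
    apply Finset.sum_eq_zero
    intro i' hi'
    have hik := mem_range.mp hi'
    rw [dcsB_gz k B _ _ (by omega) (by intro s _; omega),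
      dcsB_gz k B _ _ (by omega) (by intro s _; omega),
      dcsB_gz k B _ _ (by omega) (by intro s _; omega),
      dcsB_gz k B _ _ (by omega) (by intro s _; omega)]
    ring
  rw [h1, zero_add]
  exact Finset.sum_congr rfl (fun t _ => by rw [dcsB_e3 k B t i hi])

lemma CB_o4 (k nr : ℕ) (B : ℕ → ℕ → ℝ) (x : ℕ → ℝ) {i : ℕ} (hi : i < k) :
    ∑ r ∈ range (4*k+nr), x r * dcsB k B r (5*i+4)
      = ∑ t ∈ range nr, x (4*k+t) * B t (2*i+1) := by
  rw [split4]
  have h1 : ∑ i' ∈ range k, (x (4*i') * dcsB k B (4*i') (5*i+4)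
      + x (4*i'+1) * dcsB k B (4*i'+1) (5*i+4)
      + x (4*i'+2) * dcsB k B (4*i'+2) (5*i+4)
      + x (4*i'+3) * dcsB k B (4*i'+3) (5*i+4)) = 0 := by
    apply Finset.sum_eq_zero
    intro i' hi'
    have hik := mem_range.mp hi'
    rw [dcsB_gz k B _ _ (by omega) (by intro s _; omega),
      dcsB_gz k B _ _ (by omega) (by intro s _; omega),
      dcsB_gz k B _ _ (by omega) (by intro s _; omega),
      dcsB_gz k B _ _ (by omega) (by intro s _; omega)]
    ring
  rw [h1, zero_add]
  exact Finset.sum_congr rfl (fun t _ => by rw [dcsB_e4 k B t i hi])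

lemma CB_ext (k nr : ℕ) (B : ℕ → ℕ → ℝ) (x : ℕ → ℝ) {j : ℕ} (hj : 2*k ≤ j) :
    ∑ r ∈ range (4*k+nr), x r * dcsB k B r (3*k+j)
      = ∑ t ∈ range nr, x (4*k+t) * B t j := by
  rw [split4]
  have h1 : ∑ i' ∈ range k, (x (4*i') * dcsB k B (4*i') (3*k+j)
      + x (4*i'+1) * dcsB k B (4*i'+1) (3*k+j)
      + x (4*i'+2) * dcsB k B (4*i'+2) (3*k+j)
      + x (4*i'+3) * dcsB k B (4*i'+3) (3*k+j)) = 0 := by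
    apply Finset.sum_eq_zero
    intro i' hi'
    have hik := mem_range.mp hi'
    rw [dcsB_gz k B _ _ (by omega) (by intro s _; omega),
      dcsB_gz k B _ _ (by omega) (by intro s _; omega),
      dcsB_gz k B _ _ (by omega) (by intro s _; omega),
      dcsB_gz k B _ _ (by omega) (by intro s _; omega)]
    ring
  rw [h1, zero_add]
  exact Finset.sum_congr rfl (fun t _ => by rw [dcsB_ext k B t j hj])

lemma dcsB_nonneg (k nc nr : ℕ) (B : ℕ → ℕ → ℝ) (hB : ∀ r < nr, ∀ j < nc, 0 ≤ B r j)
    (h2k : 2*k ≤ nc) (r c : ℕ) (hr : r < 4*k+nr) (hc : c < 3*k+nc) :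
    0 ≤ dcsB k B r c := by
  simp only [dcsB]
  split_ifs
  all_goals try norm_num
  all_goals exact hB _ (by omega) _ (by omega)


end DCSproof

set_option maxHeartbeats 2000000

/-- Theorem: if `0 ≤ ε < 1/(600 n²)` and `(x*, y*)` is an `ε`-WSNE of `(A', B')`,
then the renormalizations defining the translated profile `(x, y)` are valid and
`(x, y)` is a `(1200·n²·ε)`-WSNE of `(A, B)`. -/
theorem stmt17 (n nr nc k : ℕ) (ε : ℝ) (A B : ℕ → ℕ → ℝ) (xstar ystar : ℕ → ℝ)
    (hin : DcsInput n nr nc k A B)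
    (hε0 : 0 ≤ ε) (hε : ε < 1 / (600 * (n:ℝ)^2))
    (hwsne : IsWSNE (4*k+nr) (3*k+nc) (dcsA k A) (dcsB k B) xstar ystar ε) :
    (0 < ∑ i ∈ range nr, xstar (4*k+i)) ∧
    (0 < ∑ j ∈ range nc, dcsYpp k ε ystar j) ∧
    IsWSNE nr nc A B
      (fun i => xstar (4*k+i) / ∑ i' ∈ range nr, xstar (4*k+i'))
      (fun j => dcsYpp k ε ystar j / ∑ j' ∈ range nc, dcsYpp k ε ystar j')
      (1200 * (n:ℝ)^2 * ε) := by
  classical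
  obtain ⟨hnrn, hncn, hknr, hknc, hstage, hAbd, hBbd, hArow1, hAcol1, hBrow1, hBcol1,
    h2s, hno2, hone1⟩ := hin
  obtain ⟨hx0, hxhi, hxsum, hy0, hyhi, hysum, hrow, hcol⟩ := hwsne
  have hnr0 : 0 < nr := by
    rcases Nat.eq_zero_or_pos nr with h | h
    · exfalso
      have hk0 : k = 0 := by omega
      rw [hk0, h] at hxsum
      norm_num at hxsum
    · exact h
  have hnc0 : 0 < nc := by
    rcases Nat.eq_zero_or_pos nc with h | h
    · exfalso
      have hk0 : k = 0 := by omega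
      rw [hk0, h] at hysum
      norm_num at hysum
    · exact h
  have hn0 : 0 < n := lt_of_lt_of_le hnr0 hnrn
  have hn1 : (1:ℝ) ≤ (n:ℝ) := by exact_mod_cast hn0
  have hkn : (k:ℝ) ≤ (n:ℝ) := by exact_mod_cast le_trans hknr hnrn
  have hncn' : (nc:ℝ) ≤ (n:ℝ) := by exact_mod_cast hncn
  have hk0R : (0:ℝ) ≤ (k:ℝ) := Nat.cast_nonneg k
  have hE : 600*(n:ℝ)^2*ε < 1 := by
    have hp : (0:ℝ) < 600*(n:ℝ)^2 := by positivity
    have := (lt_div_iff₀ hp).mp hε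
    linarith
  have hknε : (k:ℝ)*ε ≤ (n:ℝ)*ε := mul_le_mul_of_nonneg_right hkn hε0
  have hncε : (nc:ℝ)*ε ≤ (n:ℝ)*ε := mul_le_mul_of_nonneg_right hncn' hε0
  have hnn2 : (n:ℝ) ≤ (n:ℝ)^2 := by nlinarith [hn1]
  have hn2ε : (n:ℝ)*ε ≤ (n:ℝ)^2*ε := mul_le_mul_of_nonneg_right hnn2 hε0
  -- the unique-2 column split for A
  have hAsplitCol : ∀ i < k, ∀ jj, (jj = 2*i ∨ jj = 2*i+1) → ∀ r < nr,
      A r jj = (if r = i then (2:ℝ) else 0) + (if A r jj = 1 then (1:ℝ) else 0) := by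
    intro i hi jj hjj r hr
    have hjlt : jj < nc := by omega
    have hAi2 : A i jj = 2 := by
      rcases hjj with rfl | rfl
      exacts [(h2s i hi).1, (h2s i hi).2.1]
    by_cases hri : r = i
    · subst hri; rw [if_pos rfl, hAi2]; norm_num
    · rw [if_neg hri, zero_add]
      have hmem : A r jj ∈ ({0, 1, 2} : Set ℝ) := (hstage.1 jj hjlt).1 r hr
      have hcard : ((range nr).filter (fun r' => A r' jj = 2)).card ≤ 1 :=
        (hstage.1 jj hjlt).2.2
      have hne2 : ¬ A r jj = 2 := by
        intro h2
        have hsub : ({r, i} : Finset ℕ) ⊆ (range nr).filter (fun r' => A r' jj = 2) := by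
          intro z hz
          rcases Finset.mem_insert.mp hz with rfl | hz'
          · exact Finset.mem_filter.mpr ⟨Finset.mem_range.mpr hr, h2⟩
          · rcases Finset.mem_singleton.mp hz' with rfl
            exact Finset.mem_filter.mpr ⟨Finset.mem_range.mpr (by omega), hAi2⟩
        have h2c := Finset.card_le_card hsub
        rw [Finset.card_pair hri] at h2c
        omega
      simp only [Set.mem_insert_iff, Set.mem_singleton_iff] at hmem
      rcases hmem with h | h | h
      · rw [h]; norm_num
      · rw [h]; norm_num
      · exact absurd h hne2
  -- abbreviations
  set pbar := ∑ t ∈ range nr, xstar (4*k+t) with hpbar_def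
  set Ybar := ∑ j ∈ range nc, dcsYpp k ε ystar j with hYbar_def
  set RA : ℕ → ℝ := fun r => ∑ c ∈ range (3*k+nc), dcsA k A r c * ystar c with hRA_def
  set CB : ℕ → ℝ := fun c => ∑ r ∈ range (4*k+nr), xstar r * dcsB k B r c with hCB_def
  set pB : ℕ → ℝ := fun j => ∑ t ∈ range nr, xstar (4*k+t) * B t j with hpB_def
  have hrowRA : ∀ r, r < 4*k+nr → 0 < xstar r → ∀ r', r' < 4*k+nr → RA r ≥ RA r' - ε :=
    fun r h1 h2 r' h3 => hrow r h1 h2 r' h3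
  have hcolCB : ∀ c, c < 3*k+nc → 0 < ystar c → ∀ c', c' < 3*k+nc → CB c ≥ CB c' - ε :=
    fun c h1 h2 c' h3 => hcol c h1 h2 c' h3
  have hRAev0 : ∀ i, i < k → RA (4*i) = ystar (5*i) + ystar (5*i+3) :=
    fun i hi => DCSproof.RA_g0 k nc A ystar hknc hi
  have hRAev1 : ∀ i, i < k → RA (4*i+1) = ystar (5*i+1) + ystar (5*i+2) + ystar (5*i+3) :=
    fun i hi => DCSproof.RA_g1 k nc A ystar hknc hi
  have hRAev2 : ∀ i, i < k → RA (4*i+2) = ystar (5*i) + ystar (5*i+4) :=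
    fun i hi => DCSproof.RA_g2 k nc A ystar hknc hi
  have hRAev3 : ∀ i, i < k → RA (4*i+3) = ystar (5*i+1) + ystar (5*i+2) + ystar (5*i+4) :=
    fun i hi => DCSproof.RA_g3 k nc A ystar hknc hi
  have hRAencEv : ∀ r, RA (4*k+r)
      = (∑ i ∈ range k, ((if r = i then (2:ℝ) else 0) * ystar (5*i)
          + (if A r (2*i) = 1 then (1:ℝ) else 0) * ystar (5*i+1)
          + (if A r (2*i+1) = 1 then (1:ℝ) else 0) * ystar (5*i+2)))
        + ∑ t ∈ range (nc-2*k), A r (2*k+t) * ystar (5*k+t) :=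
    fun r => DCSproof.RA_enc k nc r A ystar hknc
  have hCBg0 : ∀ i, i < k → CB (5*i) = xstar (4*i+1) + xstar (4*i+3) :=
    fun i hi => DCSproof.CB_g0 k nr B xstar hi
  have hCBg1 : ∀ i, i < k → CB (5*i+1) = xstar (4*i) :=
    fun i hi => DCSproof.CB_g1 k nr B xstar hi
  have hCBg2 : ∀ i, i < k → CB (5*i+2) = xstar (4*i+2) :=
    fun i hi => DCSproof.CB_g2 k nr B xstar hi
  have hCBo3 : ∀ i, i < k → CB (5*i+3) = pB (2*i) :=
    fun i hi => DCSproof.CB_o3 k nr B xstar hi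
  have hCBo4 : ∀ i, i < k → CB (5*i+4) = pB (2*i+1) :=
    fun i hi => DCSproof.CB_o4 k nr B xstar hi
  have hCBext : ∀ j, 2*k ≤ j → CB (3*k+j) = pB j :=
    fun j hj => DCSproof.CB_ext k nr B xstar hj
  have hpbar0 : 0 ≤ pbar := Finset.sum_nonneg fun t _ => hx0 _
  have hpBle : ∀ j, j < nc → pB j ≤ 2 * pbar := by
    intro j hj
    rw [hpbar_def, Finset.mul_sum]
    apply Finset.sum_le_sum
    intro t ht
    have hB2 := (hBbd t (mem_range.mp ht) j hj).2
    have hxt := hx0 (4*k+t)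
    nlinarith
  have hpB0 : ∀ j, j < nc → 0 ≤ pB j := by
    intro j hj
    apply Finset.sum_nonneg
    intro t ht
    exact mul_nonneg (hx0 _) ((hBbd t (mem_range.mp ht) j hj).1)
  have hCBnn : ∀ c, c < 3*k+nc → 0 ≤ CB c := by
    intro c hc
    apply Finset.sum_nonneg
    intro r hr
    exact mul_nonneg (hx0 r)
      (DCSproof.dcsB_nonneg k nc nr B (fun r hr j hj => (hBbd r hr j hj).1) hknc r c
        (mem_range.mp hr) hc)
  have hxsplit : (∑ i ∈ range k, (xstar (4*i) + xstar (4*i+1) + xstar (4*i+2) + xstar (4*i+3)))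
      + pbar = 1 := by
    rw [hpbar_def, ← DCSproof.split4]
    exact hxsum
  set tau := ∑ i ∈ range k, ystar (5*i) with htau_def
  set sig := ∑ i ∈ range k, (ystar (5*i+1) + ystar (5*i+2)) with hsig_def
  set rho := ∑ i ∈ range k, (ystar (5*i+3) + ystar (5*i+4)) with hrho_def
  set zet := ∑ t ∈ range (nc-2*k), ystar (5*k+t) with hzet_def
  have htau0 : 0 ≤ tau := Finset.sum_nonneg fun i _ => hy0 _
  have hsig0 : 0 ≤ sig := Finset.sum_nonneg fun i _ => add_nonneg (hy0 _) (hy0 _)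
  have hrho0 : 0 ≤ rho := Finset.sum_nonneg fun i _ => add_nonneg (hy0 _) (hy0 _)
  have hzet0 : 0 ≤ zet := Finset.sum_nonneg fun t _ => hy0 _
  have hytot : tau + sig + rho + zet = 1 := by
    have h := hysum
    rw [show 3*k+nc = 5*k+(nc-2*k) by omega, DCSproof.split5] at h
    have hexp : ∑ i ∈ range k,
        (ystar (5*i) + ystar (5*i+1) + ystar (5*i+2) + ystar (5*i+3) + ystar (5*i+4))
        = tau + sig + rho := by
      rw [htau_def, hsig_def, hrho_def]
      rw [show (fun i => ystar (5*i) + ystar (5*i+1) + ystar (5*i+2) + ystar (5*i+3)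
          + ystar (5*i+4)) = (fun i => ystar (5*i) + ((ystar (5*i+1) + ystar (5*i+2))
          + (ystar (5*i+3) + ystar (5*i+4)))) from funext (fun i => by ring)]
      rw [Finset.sum_add_distrib, Finset.sum_add_distrib]
      ring
    rw [hexp] at h
    rw [hzet_def]
    linarith
  -- dcsYp / dcsYpp facts
  have hYp0 : ∀ j, 0 ≤ dcsYp k ystar j := by
    intro j
    simp only [dcsYp]
    split_ifs <;> exact hy0 _
  have hYppos : ∀ j, 0 ≤ dcsYpp k ε ystar j := by
    intro j
    simp only [dcsYpp]
    split_ifs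
    · exact le_rfl
    · exact hYp0 j
  have hYple : ∀ j, dcsYpp k ε ystar j ≤ dcsYp k ystar j := by
    intro j
    simp only [dcsYpp]
    split_ifs with h
    · exact hYp0 j
    · exact le_rfl
  have hYpdiff : ∀ j, dcsYp k ystar j - dcsYpp k ε ystar j ≤ 3*ε := by
    intro j
    simp only [dcsYpp]
    split_ifs with h
    · linarith [h.2]
    · linarith [hε0]
  have hYpp_ext : ∀ j, 2*k ≤ j → dcsYpp k ε ystar j = ystar (3*k+j) := by
    intro j hj
    have hnk : ¬ (j/2 < k) := by omega
    simp only [dcsYpp, dcsYp, if_neg hnk]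
    rw [if_neg (show ¬(j/2 < k ∧ ystar (3*k+j) < 3*ε) from fun h => hnk h.1)]
  have hYp_ev : ∀ i, i < k →
      dcsYp k ystar (2*i) = ystar (5*i+1) ∧ dcsYp k ystar (2*i+1) = ystar (5*i+2) := by
    intro i hi
    constructor
    · simp only [dcsYp, show (2*i)/2 = i by omega, show (2*i) % 2 = 0 by omega, if_pos hi]
      norm_num
    · simp only [dcsYp, show (2*i+1)/2 = i by omega, show (2*i+1) % 2 = 1 by omega, if_pos hi]
      norm_num
  -- Lemma V : some column payoff exceeds ε
  have hocP : ∀ j', j' < nc → ∃ c', c' < 3*k+nc ∧ CB c' = pB j' := by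
    intro j' hj'
    by_cases h2 : j' < 2*k
    · rcases (by omega : j' = 2*(j'/2) ∨ j' = 2*(j'/2)+1) with hj'' | hj''
      · exact ⟨5*(j'/2)+3, by omega, by rw [hCBo3 (j'/2) (by omega), ← hj'']⟩
      · exact ⟨5*(j'/2)+4, by omega, by rw [hCBo4 (j'/2) (by omega), ← hj'']⟩
    · exact ⟨3*k+j', by omega, by rw [hCBext j' (by omega)]⟩
  have hV : ∃ c₀, c₀ < 3*k+nc ∧ ε < CB c₀ := by
    by_contra hall
    push_neg at hall
    have hG : (∑ i ∈ range k, (xstar (4*i) + xstar (4*i+1) + xstar (4*i+2) + xstar (4*i+3)))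
        ≤ (k:ℝ) * (3*ε) := by
      calc (∑ i ∈ range k, (xstar (4*i) + xstar (4*i+1) + xstar (4*i+2) + xstar (4*i+3)))
          ≤ ∑ _i ∈ range k, 3*ε := by
            apply Finset.sum_le_sum
            intro i hi
            have hik := mem_range.mp hi
            have u0 := hall (5*i) (by omega)
            have u1 := hall (5*i+1) (by omega)
            have u2 := hall (5*i+2) (by omega)
            rw [hCBg0 i hik] at u0
            rw [hCBg1 i hik] at u1
            rw [hCBg2 i hik] at u2
            linarith
        _ = (k:ℝ) * (3*ε) := by rw [Finset.sum_const, card_range, nsmul_eq_mul]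
    have hup : ∑ j ∈ range nc, pB j ≤ (nc:ℝ) * ε := by
      calc ∑ j ∈ range nc, pB j ≤ ∑ _j ∈ range nc, ε := by
            apply Finset.sum_le_sum
            intro j hj
            obtain ⟨c', hc'lt, hc'eq⟩ := hocP j (mem_range.mp hj)
            rw [← hc'eq]
            exact hall c' hc'lt
        _ = (nc:ℝ) * ε := by rw [Finset.sum_const, card_range, nsmul_eq_mul]
    have hlow : pbar ≤ ∑ j ∈ range nc, pB j := by
      have hswap : ∑ j ∈ range nc, pB j
          = ∑ t ∈ range nr, (xstar (4*k+t) * ∑ j ∈ range nc, B t j) := by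
        rw [hpB_def, Finset.sum_comm]
        exact Finset.sum_congr rfl fun t _ => by rw [Finset.mul_sum]
      rw [hswap, hpbar_def]
      apply Finset.sum_le_sum
      intro t ht
      have htn := mem_range.mp ht
      obtain ⟨j₀, hj₀, hB1⟩ := hBrow1 t htn
      have hrow1 : 1 ≤ ∑ j ∈ range nc, B t j := by
        calc (1:ℝ) ≤ B t j₀ := hB1
          _ ≤ ∑ j ∈ range nc, B t j :=
            Finset.single_le_sum (fun j hj => (hBbd t htn j (mem_range.mp hj)).1)
              (Finset.mem_range.mpr hj₀)
      nlinarith [hx0 (4*k+t)]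
    have hone : (1:ℝ) ≤ 3*((k:ℝ)*ε) + (nc:ℝ)*ε := by linarith [hxsplit]
    linarith [hknε, hncε, hn2ε, hE, hone]
  obtain ⟨c₀, hc₀lt, hc₀⟩ := hV
  have hyCB : ∀ c, c < 3*k+nc → 0 < ystar c → 0 < CB c := by
    intro c h1 h2
    have := hcolCB c h1 h2 c₀ hc₀lt
    linarith
  -- D bounds
  have hDub : ∀ i, i < k → ystar (5*i+1) + ystar (5*i+2) ≤ ystar (5*i) + ε := by
    intro i hi
    by_cases h1 : 0 < ystar (5*i+1)
    · have ha : 0 < xstar (4*i) := by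
        have := hyCB (5*i+1) (by omega) h1
        rwa [hCBg1 i hi] at this
      have hcmp := hrowRA (4*i) (by omega) ha (4*i+1) (by omega)
      rw [hRAev0 i hi, hRAev1 i hi] at hcmp
      linarith
    · by_cases h2 : 0 < ystar (5*i+2)
      · have hc : 0 < xstar (4*i+2) := by
          have := hyCB (5*i+2) (by omega) h2
          rwa [hCBg2 i hi] at this
        have hcmp := hrowRA (4*i+2) (by omega) hc (4*i+3) (by omega)
        rw [hRAev2 i hi, hRAev3 i hi] at hcmp
        linarith
      · have e1 : ystar (5*i+1) ≤ 0 := not_lt.mp h1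
        have e2 : ystar (5*i+2) ≤ 0 := not_lt.mp h2
        linarith [hy0 (5*i)]
  have hDlb : ∀ i, i < k → ystar (5*i) ≤ ystar (5*i+1) + ystar (5*i+2) + ε := by
    intro i hi
    by_cases h0 : 0 < ystar (5*i)
    · have hbd : 0 < xstar (4*i+1) + xstar (4*i+3) := by
        have := hyCB (5*i) (by omega) h0
        rwa [hCBg0 i hi] at this
      have hbd' : 0 < xstar (4*i+1) ∨ 0 < xstar (4*i+3) := by
        by_contra hcon
        push_neg at hcon
        linarith [hcon.1, hcon.2]
      rcases hbd' with hb | hd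
      · have hcmp := hrowRA (4*i+1) (by omega) hb (4*i) (by omega)
        rw [hRAev0 i hi, hRAev1 i hi] at hcmp
        linarith
      · have hcmp := hrowRA (4*i+3) (by omega) hd (4*i+2) (by omega)
        rw [hRAev2 i hi, hRAev3 i hi] at hcmp
        linarith
    · linarith [hy0 (5*i+1), hy0 (5*i+2), not_lt.mp h0]
  have hRAge2 : ∀ r, r < k → 2*ystar (5*r) ≤ RA (4*k+r) := by
    intro r hrk
    rw [hRAencEv r]
    have hterm : ∀ i ∈ range k, (0:ℝ) ≤ (if r = i then (2:ℝ) else 0) * ystar (5*i)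
        + (if A r (2*i) = 1 then (1:ℝ) else 0) * ystar (5*i+1)
        + (if A r (2*i+1) = 1 then (1:ℝ) else 0) * ystar (5*i+2) := by
      intro i _
      refine add_nonneg (add_nonneg (mul_nonneg ?_ (hy0 _)) (mul_nonneg ?_ (hy0 _)))
        (mul_nonneg ?_ (hy0 _)) <;> (split_ifs <;> norm_num)
    have hext : (0:ℝ) ≤ ∑ t ∈ range (nc-2*k), A r (2*k+t) * ystar (5*k+t) := by
      apply Finset.sum_nonneg
      intro t ht
      exact mul_nonneg ((hAbd r (by omega) (2*k+t) (by have := mem_range.mp ht; omega)).1)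
        (hy0 _)
    have hsingle := Finset.single_le_sum hterm (Finset.mem_range.mpr hrk)
    rw [if_pos rfl] at hsingle
    have t1 : (0:ℝ) ≤ (if A r (2*r) = 1 then (1:ℝ) else 0) * ystar (5*r+1) :=
      mul_nonneg (by split_ifs <;> norm_num) (hy0 _)
    have t2 : (0:ℝ) ≤ (if A r (2*r+1) = 1 then (1:ℝ) else 0) * ystar (5*r+2) :=
      mul_nonneg (by split_ifs <;> norm_num) (hy0 _)
    linarith
  -- forcing lemmas
  have hforce1 : ∀ i, i < k → 3*ε ≤ ystar (5*i+1) → 0 < ystar (5*i+1) →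
      ∀ c', c' < 3*k+nc → CB c' - ε ≤ CB (5*i+3) := by
    intro i hi h3 hpos c' hc'
    rcases (hx0 (4*i)).lt_or_eq with ha | ha
    · have hy3 : 0 < ystar (5*i+3) := by
        rcases (hy0 (5*i+3)).lt_or_eq with h | h
        · exact h
        · exfalso
          have hr1 := hrowRA (4*i) (by omega) ha (4*k+i) (by omega)
          have hr2 := hrowRA (4*i) (by omega) ha (4*i+1) (by omega)
          rw [hRAev0 i hi] at hr1 hr2
          rw [hRAev1 i hi] at hr2
          have hge := hRAge2 i hi
          have hy2' := hy0 (5*i+2)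
          linarith [h.symm ▸ (le_refl (0:ℝ))]
      have := hcolCB (5*i+3) (by omega) hy3 c' hc'
      linarith
    · have h1 := hcolCB (5*i+1) (by omega) hpos c' hc'
      rw [hCBg1 i hi, ← ha] at h1
      have := hCBnn (5*i+3) (by omega)
      linarith
  have hforce2 : ∀ i, i < k → 3*ε ≤ ystar (5*i+2) → 0 < ystar (5*i+2) →
      ∀ c', c' < 3*k+nc → CB c' - ε ≤ CB (5*i+4) := by
    intro i hi h3 hpos c' hc'
    rcases (hx0 (4*i+2)).lt_or_eq with ha | ha
    · have hy4 : 0 < ystar (5*i+4) := by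
        rcases (hy0 (5*i+4)).lt_or_eq with h | h
        · exact h
        · exfalso
          have hr1 := hrowRA (4*i+2) (by omega) ha (4*k+i) (by omega)
          have hr2 := hrowRA (4*i+2) (by omega) ha (4*i+3) (by omega)
          rw [hRAev2 i hi] at hr1 hr2
          rw [hRAev3 i hi] at hr2
          have hge := hRAge2 i hi
          have hy1' := hy0 (5*i+1)
          linarith [h.symm ▸ (le_refl (0:ℝ))]
      have := hcolCB (5*i+4) (by omega) hy4 c' hc'
      linarith
    · have h1 := hcolCB (5*i+2) (by omega) hpos c' hc'
      rw [hCBg2 i hi, ← ha] at h1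
      have := hCBnn (5*i+4) (by omega)
      linarith
  -- column-side main
  have hcolmain : ∀ j, j < nc → 0 < dcsYpp k ε ystar j → ∀ j', j' < nc →
      pB j' - ε ≤ pB j := by
    intro j hj hpos j' hj'
    obtain ⟨c', hc'lt, hc'eq⟩ := hocP j' hj'
    by_cases h2 : j < 2*k
    · have htrm : ¬ (j/2 < k ∧ dcsYp k ystar j < 3*ε) := by
        intro hcon
        have : dcsYpp k ε ystar j = 0 := by simp only [dcsYpp, if_pos hcon]
        rw [this] at hpos
        exact lt_irrefl 0 hpos
      have h3e : 3*ε ≤ dcsYp k ystar j := by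
        push_neg at htrm
        exact htrm (by omega)
      have hYppj : dcsYpp k ε ystar j = dcsYp k ystar j := by
        simp only [dcsYpp, if_neg htrm]
      have hposYp : 0 < dcsYp k ystar j := by rw [← hYppj]; exact hpos
      rcases (by omega : j = 2*(j/2) ∨ j = 2*(j/2)+1) with hj'' | hj''
      · have hYpv : dcsYp k ystar j = ystar (5*(j/2)+1) := by
          conv_lhs => rw [hj'']
          exact (hYp_ev (j/2) (by omega)).1
        have h1 := hforce1 (j/2) (by omega) (by rw [← hYpv]; exact h3e)
          (by rw [← hYpv]; exact hposYp) c' hc'lt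
        rw [hc'eq, hCBo3 (j/2) (by omega)] at h1
        rw [hj'']
        exact h1
      · have hYpv : dcsYp k ystar j = ystar (5*(j/2)+2) := by
          conv_lhs => rw [hj'']
          exact (hYp_ev (j/2) (by omega)).2
        have h1 := hforce2 (j/2) (by omega) (by rw [← hYpv]; exact h3e)
          (by rw [← hYpv]; exact hposYp) c' hc'lt
        rw [hc'eq, hCBo4 (j/2) (by omega)] at h1
        rw [hj'']
        exact h1
    · have h2k' : 2*k ≤ j := by omega
      have hpos' : 0 < ystar (3*k+j) := by rw [← hYpp_ext j h2k']; exact hpos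
      have h1 := hcolCB (3*k+j) (by omega) hpos' c' hc'lt
      rw [hc'eq, hCBext j h2k'] at h1
      linarith
  -- quantitative lower bound on pbar
  have hp8 : 1/(8*(n:ℝ)) ≤ pbar := by
    have hub1 : 1/(8*(n:ℝ)) ≤ 1 := by
      rw [div_le_one (by positivity)]
      linarith
    rcases Nat.eq_zero_or_pos k with hk0 | hk1
    · have hpb1 : pbar = 1 := by
        rw [hpbar_def, ← hxsum, hk0]
        apply Finset.sum_congr (by norm_num)
        intro t _
        norm_num
      rw [hpb1]
      exact hub1
    · have hk1' : (1:ℝ) ≤ (k:ℝ) := by exact_mod_cast hk1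
      by_cases hcase : ∀ i, i < k → CB (5*i) ≤ 2*pbar + ε ∧ CB (5*i+1) ≤ 2*pbar + ε
          ∧ CB (5*i+2) ≤ 2*pbar + ε
      · have hG : (∑ i ∈ range k, (xstar (4*i) + xstar (4*i+1) + xstar (4*i+2) + xstar (4*i+3)))
            ≤ (k:ℝ) * (3*(2*pbar+ε)) := by
          calc (∑ i ∈ range k, (xstar (4*i) + xstar (4*i+1) + xstar (4*i+2) + xstar (4*i+3)))
              ≤ ∑ _i ∈ range k, 3*(2*pbar+ε) := by
                apply Finset.sum_le_sum
                intro i hi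
                have hik := mem_range.mp hi
                obtain ⟨u0, u1, u2⟩ := hcase i hik
                rw [hCBg0 i hik] at u0
                rw [hCBg1 i hik] at u1
                rw [hCBg2 i hik] at u2
                linarith
            _ = (k:ℝ) * (3*(2*pbar+ε)) := by rw [Finset.sum_const, card_range, nsmul_eq_mul]
        rw [div_le_iff₀ (by positivity)]
        have hm1 : (k:ℝ)*pbar ≤ (n:ℝ)*pbar := mul_le_mul_of_nonneg_right hkn hpbar0
        have hm2 : (0:ℝ) ≤ ((n:ℝ)-1)*pbar := mul_nonneg (sub_nonneg.mpr hn1) hpbar0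
        linarith [hxsplit, hG, hknε, hn2ε, hE, hm1, hm2]
      · push_neg at hcase
        obtain ⟨i₀, hi₀k, hbig⟩ := hcase
        have hc₁ex : ∃ c₁, c₁ < 3*k+nc ∧ 2*pbar + ε < CB c₁ := by
          by_cases hb0 : CB (5*i₀) ≤ 2*pbar + ε
          · by_cases hb1 : CB (5*i₀+1) ≤ 2*pbar + ε
            · exact ⟨5*i₀+2, by omega, hbig hb0 hb1⟩
            · exact ⟨5*i₀+1, by omega, not_le.mp hb1⟩
          · exact ⟨5*i₀, by omega, not_le.mp hb0⟩
        obtain ⟨c₁, hc₁lt, hc₁big⟩ := hc₁ex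
        have horig : ∀ j, j < nc → ∀ c, c < 3*k+nc → CB c = pB j → ystar c = 0 := by
          intro j hj c hclt hceq
          rcases (hy0 c).lt_or_eq with hpos | h0
          · exfalso
            have hsup := hcolCB c hclt hpos c₁ hc₁lt
            have hle := hpBle j hj
            rw [hceq] at hsup
            linarith
          · exact h0.symm
        have hz3 : ∀ i, i < k → ystar (5*i+3) = 0 :=
          fun i hi => horig (2*i) (by omega) _ (by omega) (hCBo3 i hi)
        have hz4 : ∀ i, i < k → ystar (5*i+4) = 0 :=
          fun i hi => horig (2*i+1) (by omega) _ (by omega) (hCBo4 i hi)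
        have hzext : ∀ t, t < nc - 2*k → ystar (5*k+t) = 0 := by
          intro t ht
          have h1 := horig (2*k+t) (by omega) (3*k+(2*k+t)) (by omega)
            (hCBext (2*k+t) (by omega))
          rw [show 3*k+(2*k+t) = 5*k+t by omega] at h1
          exact h1
        have hrho0' : rho = 0 := Finset.sum_eq_zero fun i hi => by
          rw [hz3 i (mem_range.mp hi), hz4 i (mem_range.mp hi), add_zero]
        have hzet0' : zet = 0 := Finset.sum_eq_zero fun t ht => hzext t (mem_range.mp ht)
        have htot1 : tau + sig = 1 := by
          rw [hrho0', hzet0'] at hytot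
          linarith
        have hkpos : (0:ℝ) < (k:ℝ) := by positivity
        have hts' : tau + sig = ∑ i ∈ range k, (ystar (5*i) + (ystar (5*i+1) + ystar (5*i+2))) := by
          rw [htau_def, hsig_def, ← Finset.sum_add_distrib]
        have hks : ∃ i, i < k ∧ 1 ≤ (k:ℝ) * (ystar (5*i) + (ystar (5*i+1) + ystar (5*i+2))) := by
          by_contra hcon
          push_neg at hcon
          have hlt : ∑ i ∈ range k, (ystar (5*i) + (ystar (5*i+1) + ystar (5*i+2)))
              < ∑ _i ∈ range k, 1/(k:ℝ) := by
            apply Finset.sum_lt_sum_of_nonempty (Finset.nonempty_range_iff.mpr (by omega))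
            intro i hi
            have h := hcon i (mem_range.mp hi)
            rw [lt_div_iff₀ hkpos]
            nlinarith [h]
          rw [Finset.sum_const, card_range, nsmul_eq_mul] at hlt
          rw [mul_one_div, div_self (ne_of_gt hkpos)] at hlt
          rw [hts'] at htot1
          linarith
        obtain ⟨iS, hiSk, hiSbig⟩ := hks
        have hka : ∀ i', i' < k → xstar (4*i') = 0 ∧ xstar (4*i'+2) = 0 := by
          intro i' hi'
          have hbody : ∀ rr, (rr = 4*i' ∨ rr = 4*i'+2) → ¬ (0 < xstar rr) := by
            intro rr hrr hpos
            have hlt : rr < 4*k+nr := by omega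
            have hr1 := hrowRA rr hlt hpos (4*k+i') (by omega)
            have hr2 := hrowRA rr hlt hpos (4*iS+1) (by omega)
            have hr3 := hrowRA rr hlt hpos (4*k+iS) (by omega)
            have hRArr : RA rr = ystar (5*i') := by
              rcases hrr with rfl | rfl
              · rw [hRAev0 i' hi', hz3 i' hi', add_zero]
              · rw [hRAev2 i' hi', hz4 i' hi', add_zero]
            rw [hRArr] at hr1 hr2 hr3
            rw [hRAev1 iS hiSk, hz3 iS hiSk, add_zero] at hr2
            have hge1 := hRAge2 i' hi'
            have hge2 := hRAge2 iS hiSk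
            have hy0' : ystar (5*i') ≤ ε := by linarith
            have hy12S : ystar (5*iS+1) + ystar (5*iS+2) ≤ 2*ε := by linarith
            have hy0S : ystar (5*iS) ≤ ε := by linarith
            have huS : ystar (5*iS) + (ystar (5*iS+1) + ystar (5*iS+2)) ≤ 3*ε := by linarith
            have hk3 : (k:ℝ) * (ystar (5*iS) + (ystar (5*iS+1) + ystar (5*iS+2)))
                ≤ (k:ℝ) * (3*ε) := mul_le_mul_of_nonneg_left huS hk0R
            linarith [hknε, hn2ε, hE, hiSbig, hk3]
          constructor
          · rcases (hx0 (4*i')).lt_or_eq with hpos | h0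
            · exact absurd hpos (hbody (4*i') (Or.inl rfl))
            · exact h0.symm
          · rcases (hx0 (4*i'+2)).lt_or_eq with hpos | h0
            · exact absurd hpos (hbody (4*i'+2) (Or.inr rfl))
            · exact h0.symm
        have hy12z : ∀ i', i' < k → ystar (5*i'+1) = 0 ∧ ystar (5*i'+2) = 0 := by
          intro i' hi'
          have hCB10 : CB (5*i'+1) = 0 := by rw [hCBg1 i' hi']; exact (hka i' hi').1
          have hCB20 : CB (5*i'+2) = 0 := by rw [hCBg2 i' hi']; exact (hka i' hi').2
          constructor
          · rcases (hy0 (5*i'+1)).lt_or_eq with hpos | h0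
            · exfalso
              have := hcolCB (5*i'+1) (by omega) hpos c₁ hc₁lt
              rw [hCB10] at this
              linarith [hpbar0, hε0]
            · exact h0.symm
          · rcases (hy0 (5*i'+2)).lt_or_eq with hpos | h0
            · exfalso
              have := hcolCB (5*i'+2) (by omega) hpos c₁ hc₁lt
              rw [hCB20] at this
              linarith [hpbar0, hε0]
            · exact h0.symm
        have hsig0' : sig = 0 := Finset.sum_eq_zero fun i hi => by
          rw [(hy12z i (mem_range.mp hi)).1, (hy12z i (mem_range.mp hi)).2, add_zero]
        have htau1 : tau = 1 := by linarith [htot1]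
        have hks1 : ∃ i₁, i₁ < k ∧ 1 ≤ (k:ℝ) * ystar (5*i₁) := by
          by_contra hcon
          push_neg at hcon
          have hlt : ∑ i ∈ range k, ystar (5*i) < ∑ _i ∈ range k, 1/(k:ℝ) := by
            apply Finset.sum_lt_sum_of_nonempty (Finset.nonempty_range_iff.mpr (by omega))
            intro i hi
            have h := hcon i (mem_range.mp hi)
            rw [lt_div_iff₀ hkpos]
            nlinarith [h]
          rw [Finset.sum_const, card_range, nsmul_eq_mul] at hlt
          rw [mul_one_div, div_self (ne_of_gt hkpos)] at hlt
          rw [htau_def] at htau1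
          linarith
        obtain ⟨i₁, hi₁k, hi₁big⟩ := hks1
        have hbd : ∀ i', i' < k → xstar (4*i'+1) = 0 ∧ xstar (4*i'+3) = 0 := by
          intro i' hi'
          have hbody : ∀ rr, (rr = 4*i'+1 ∨ rr = 4*i'+3) → ¬ (0 < xstar rr) := by
            intro rr hrr hpos
            have hlt : rr < 4*k+nr := by omega
            have hr1 := hrowRA rr hlt hpos (4*k+i₁) (by omega)
            have hRArr : RA rr = 0 := by
              rcases hrr with rfl | rfl
              · rw [hRAev1 i' hi', (hy12z i' hi').1, (hy12z i' hi').2, hz3 i' hi']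
                ring
              · rw [hRAev3 i' hi', (hy12z i' hi').1, (hy12z i' hi').2, hz4 i' hi']
                ring
            rw [hRArr] at hr1
            have hge1 := hRAge2 i₁ hi₁k
            have hy01 : ystar (5*i₁) ≤ ε := by linarith
            have hk1'' : (k:ℝ) * ystar (5*i₁) ≤ (k:ℝ) * ε :=
              mul_le_mul_of_nonneg_left hy01 hk0R
            linarith [hknε, hn2ε, hE, hi₁big, hk1'']
          constructor
          · rcases (hx0 (4*i'+1)).lt_or_eq with hpos | h0
            · exact absurd hpos (hbody (4*i'+1) (Or.inl rfl))
            · exact h0.symm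
          · rcases (hx0 (4*i'+3)).lt_or_eq with hpos | h0
            · exact absurd hpos (hbody (4*i'+3) (Or.inr rfl))
            · exact h0.symm
        have hG0 : ∑ i ∈ range k, (xstar (4*i) + xstar (4*i+1) + xstar (4*i+2) + xstar (4*i+3))
            = 0 := Finset.sum_eq_zero fun i hi => by
          rw [(hka i (mem_range.mp hi)).1, (hka i (mem_range.mp hi)).2,
            (hbd i (mem_range.mp hi)).1, (hbd i (mem_range.mp hi)).2]
          ring
        have hpb1 : pbar = 1 := by linarith [hxsplit]
        rw [hpb1]
        exact hub1
  have hppos : 0 < pbar := lt_of_lt_of_le (by positivity) hp8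
  -- quantitative lower bound on Ybar
  have hY10 : 1/(10*(n:ℝ)) ≤ Ybar := by
    have hub1 : 1/(10*(n:ℝ)) ≤ 1 := by
      rw [div_le_one (by positivity)]
      linarith
    have hYbar0 : 0 ≤ Ybar := Finset.sum_nonneg fun j _ => hYppos j
    rcases Nat.eq_zero_or_pos k with hk0 | hk1
    · have hYb1 : Ybar = 1 := by
        rw [hYbar_def, ← hysum]
        refine Finset.sum_congr (by congr 1; omega) (fun j hj => ?_)
        rw [hYpp_ext j (by omega)]
        congr 1
        omega
      rw [hYb1]
      exact hub1
    · have hk1' : (1:ℝ) ≤ (k:ℝ) := by exact_mod_cast hk1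
      have hts : tau ≤ sig + (k:ℝ)*ε := by
        have h1 : tau ≤ ∑ i ∈ range k, ((ystar (5*i+1) + ystar (5*i+2)) + ε) :=
          Finset.sum_le_sum fun i hi => hDlb i (mem_range.mp hi)
        rw [Finset.sum_add_distrib, Finset.sum_const, card_range, nsmul_eq_mul] at h1
        linarith
      obtain ⟨r₀, hr₀, hpr₀⟩ : ∃ t, t < nr ∧ 0 < xstar (4*k+t) := by
        by_contra hcon
        push_neg at hcon
        have hpb0 : pbar = 0 := Finset.sum_eq_zero fun t ht =>
          le_antisymm (hcon t (mem_range.mp ht)) (hx0 _)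
        rw [hpb0] at hppos
        exact lt_irrefl 0 hppos
      have hRAub : RA (4*k+r₀) ≤ 2*tau + sig + 2*zet := by
        rw [hRAencEv r₀]
        have h1 : (∑ i ∈ range k, ((if r₀ = i then (2:ℝ) else 0) * ystar (5*i)
            + (if A r₀ (2*i) = 1 then (1:ℝ) else 0) * ystar (5*i+1)
            + (if A r₀ (2*i+1) = 1 then (1:ℝ) else 0) * ystar (5*i+2)))
            ≤ ∑ i ∈ range k, (2*ystar (5*i) + (ystar (5*i+1) + ystar (5*i+2))) := by
          apply Finset.sum_le_sum
          intro i _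
          have hy1 := hy0 (5*i)
          have hy2 := hy0 (5*i+1)
          have hy3 := hy0 (5*i+2)
          split_ifs <;> linarith
        have h2 : ∑ t ∈ range (nc-2*k), A r₀ (2*k+t) * ystar (5*k+t)
            ≤ ∑ t ∈ range (nc-2*k), 2*ystar (5*k+t) := by
          apply Finset.sum_le_sum
          intro t ht
          have hA2 := (hAbd r₀ (by omega) (2*k+t) (by have := mem_range.mp ht; omega))
          have hyt := hy0 (5*k+t)
          nlinarith [hA2.1, hA2.2]
        have h1' : ∑ i ∈ range k, (2*ystar (5*i) + (ystar (5*i+1) + ystar (5*i+2)))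
            = 2*tau + sig := by
          rw [Finset.sum_add_distrib, htau_def, hsig_def, ← Finset.mul_sum]
        have h2' : ∑ t ∈ range (nc-2*k), 2*ystar (5*k+t) = 2*zet := by
          rw [hzet_def, ← Finset.mul_sum]
        linarith
      have hrho : rho ≤ (k:ℝ) * (2*(2*tau+sig+2*zet) + 2*ε) := by
        have h1 : rho ≤ ∑ _i ∈ range k, (2*(2*tau+sig+2*zet) + 2*ε) := by
          apply Finset.sum_le_sum
          intro i hi
          have hik := mem_range.mp hi
          have h3 := hrowRA (4*k+r₀) (by omega) hpr₀ (4*i) (by omega)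
          have h4 := hrowRA (4*k+r₀) (by omega) hpr₀ (4*i+2) (by omega)
          rw [hRAev0 i hik] at h3
          rw [hRAev2 i hik] at h4
          have hyi := hy0 (5*i)
          linarith [hRAub]
        rw [Finset.sum_const, card_range, nsmul_eq_mul] at h1
        exact h1
      have hYb : sig + zet - (k:ℝ)*(6*ε) ≤ Ybar := by
        have hL : Ybar = ∑ i ∈ range k, (dcsYpp k ε ystar (2*i) + dcsYpp k ε ystar (2*i+1))
            + ∑ t ∈ range (nc-2*k), dcsYpp k ε ystar (2*k+t) := by
          rw [hYbar_def]
          conv_lhs => rw [show nc = 2*k+(nc-2*k) by omega]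
          rw [DCSproof.split2]
        have hpart1 : sig - (k:ℝ)*(6*ε)
            ≤ ∑ i ∈ range k, (dcsYpp k ε ystar (2*i) + dcsYpp k ε ystar (2*i+1)) := by
          have hpt : ∀ i ∈ range k, (ystar (5*i+1) + ystar (5*i+2)) - 6*ε
              ≤ dcsYpp k ε ystar (2*i) + dcsYpp k ε ystar (2*i+1) := by
            intro i hi
            have hik := mem_range.mp hi
            have d1 := hYpdiff (2*i)
            have d2 := hYpdiff (2*i+1)
            rw [(hYp_ev i hik).1] at d1
            rw [(hYp_ev i hik).2] at d2
            linarith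
          have h1 : ∑ i ∈ range k, ((ystar (5*i+1) + ystar (5*i+2)) - 6*ε)
              ≤ ∑ i ∈ range k, (dcsYpp k ε ystar (2*i) + dcsYpp k ε ystar (2*i+1)) :=
            Finset.sum_le_sum hpt
          rw [Finset.sum_sub_distrib, Finset.sum_const, card_range, nsmul_eq_mul] at h1
          linarith
        have hpart2 : ∑ t ∈ range (nc-2*k), dcsYpp k ε ystar (2*k+t) = zet := by
          apply Finset.sum_congr rfl
          intro t _
          rw [hYpp_ext (2*k+t) (by omega), show 3*k+(2*k+t) = 5*k+t by omega]
        rw [hL, hpart2]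
        linarith
      -- final arithmetic
      rw [div_le_iff₀ (by positivity)]
      have hstep1 : rho ≤ 6*(k:ℝ)*sig + 4*(k:ℝ)*zet + (4*(k:ℝ)^2+2*(k:ℝ))*ε := by
        have hmul := mul_le_mul_of_nonneg_left hts (by positivity : (0:ℝ) ≤ 4*(k:ℝ))
        linarith [hrho, hmul]
      have hstep2 : 1 ≤ (6*(k:ℝ)+2)*(sig+zet) + (4*(k:ℝ)^2+3*(k:ℝ))*ε := by
        have hkz : 0 ≤ (k:ℝ)*zet := mul_nonneg hk0R hzet0
        have hks' : 0 ≤ (k:ℝ)*sig := mul_nonneg hk0R hsig0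
        linarith [hytot, hts, hstep1, hsig0, hzet0, hkz, hks']
      have hstep3 : sig + zet ≤ Ybar + 6*(k:ℝ)*ε := by linarith [hYb]
      have hstep4 : 1 ≤ (6*(k:ℝ)+2)*Ybar + (40*(k:ℝ)^2+15*(k:ℝ))*ε := by
        have hmul := mul_le_mul_of_nonneg_left hstep3
          (by positivity : (0:ℝ) ≤ 6*(k:ℝ)+2)
        linarith [hstep2, hmul]
      have hkY : (6*(k:ℝ)+2)*Ybar ≤ 8*((n:ℝ)*Ybar) := by
        linarith [mul_nonneg (sub_nonneg.mpr hk1') hYbar0,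
          mul_nonneg (sub_nonneg.mpr hkn) hYbar0]
      have hk2e : (40*(k:ℝ)^2+15*(k:ℝ))*ε ≤ 55*((n:ℝ)^2*ε) := by
        have hkk : (k:ℝ) ≤ (k:ℝ)^2 := by nlinarith [hk1']
        have hk2n2 : (k:ℝ)^2 ≤ (n:ℝ)^2 := by nlinarith [hk1', hkn]
        linarith [mul_le_mul_of_nonneg_right hkk hε0,
          mul_le_mul_of_nonneg_right hk2n2 hε0]
      -- 1 ≤ 8 n Ybar + 55 n² ε and 600 n² ε < 1 gives 10 n Ybar ≥ 1
      linarith [hstep4, hkY, hk2e, hE]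
  have hYpos : 0 < Ybar := lt_of_lt_of_le (by positivity) hY10
  -- row-side identities
  have hSid : ∀ r, r < nr → ∑ j ∈ range nc, A r j * dcsYp k ystar j
      = RA (4*k+r) + (if r < k then 2*(ystar (5*r+1) + ystar (5*r+2)) - 2*ystar (5*r) else 0) := by
    intro r hrn
    rw [hRAencEv r]
    have hL : ∑ j ∈ range nc, A r j * dcsYp k ystar j
        = ∑ i ∈ range k, (A r (2*i) * dcsYp k ystar (2*i) + A r (2*i+1) * dcsYp k ystar (2*i+1))
          + ∑ t ∈ range (nc-2*k), A r (2*k+t) * dcsYp k ystar (2*k+t) := by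
      conv_lhs => rw [show nc = 2*k+(nc-2*k) by omega]
      rw [DCSproof.split2]
    rw [hL]
    have hg : ∑ i ∈ range k, (A r (2*i) * dcsYp k ystar (2*i) + A r (2*i+1) * dcsYp k ystar (2*i+1))
        = (∑ i ∈ range k, ((if r = i then (2:ℝ) else 0) * ystar (5*i)
            + (if A r (2*i) = 1 then (1:ℝ) else 0) * ystar (5*i+1)
            + (if A r (2*i+1) = 1 then (1:ℝ) else 0) * ystar (5*i+2)))
          + (if r < k then 2*(ystar (5*r+1) + ystar (5*r+2)) - 2*ystar (5*r) else 0) := by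
      have hpt : ∀ i ∈ range k,
          A r (2*i) * dcsYp k ystar (2*i) + A r (2*i+1) * dcsYp k ystar (2*i+1)
          = ((if r = i then (2:ℝ) else 0) * ystar (5*i)
              + (if A r (2*i) = 1 then (1:ℝ) else 0) * ystar (5*i+1)
              + (if A r (2*i+1) = 1 then (1:ℝ) else 0) * ystar (5*i+2))
            + ((if r = i then (2:ℝ) else 0) * (ystar (5*i+1) + ystar (5*i+2))
              - (if r = i then (2:ℝ) else 0) * ystar (5*i)) := by
        intro i hi
        have hik := mem_range.mp hi
        rw [(hYp_ev i hik).1, (hYp_ev i hik).2]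
        linear_combination (hAsplitCol i hik (2*i) (Or.inl rfl) r hrn) * ystar (5*i+1)
          + (hAsplitCol i hik (2*i+1) (Or.inr rfl) r hrn) * ystar (5*i+2)
      rw [Finset.sum_congr rfl hpt, Finset.sum_add_distrib]
      congr 1
      have h1 : ∀ i ∈ range k, (if r = i then (2:ℝ) else 0) * (ystar (5*i+1)+ystar (5*i+2))
          - (if r = i then (2:ℝ) else 0) * ystar (5*i)
          = (if r = i then 2*(ystar (5*i+1)+ystar (5*i+2)) - 2*ystar (5*i) else 0) := by
        intro i _
        split_ifs <;> ring
      rw [Finset.sum_congr rfl h1,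
        Finset.sum_ite_eq (range k) r (fun i => 2*(ystar (5*i+1)+ystar (5*i+2)) - 2*ystar (5*i))]
      simp [Finset.mem_range]
    have hext : ∑ t ∈ range (nc-2*k), A r (2*k+t) * dcsYp k ystar (2*k+t)
        = ∑ t ∈ range (nc-2*k), A r (2*k+t) * ystar (5*k+t) := by
      apply Finset.sum_congr rfl
      intro t ht
      have hYpt : dcsYp k ystar (2*k+t) = ystar (5*k+t) := by
        simp only [dcsYp, if_neg (show ¬ (2*k+t)/2 < k by omega)]
        rw [show 3*k+(2*k+t) = 5*k+t by omega]
      rw [hYpt]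
    rw [hg, hext]
    ring
  have htrim : ∀ r, r < nr →
      (∑ j ∈ range nc, A r j * dcsYp k ystar j) - 12*(k:ℝ)*ε
        ≤ ∑ j ∈ range nc, A r j * dcsYpp k ε ystar j
      ∧ ∑ j ∈ range nc, A r j * dcsYpp k ε ystar j
        ≤ ∑ j ∈ range nc, A r j * dcsYp k ystar j := by
    intro r hrn
    have hptub : ∀ j ∈ range nc, A r j * dcsYpp k ε ystar j ≤ A r j * dcsYp k ystar j :=
      fun j hj => mul_le_mul_of_nonneg_left (hYple j) ((hAbd r hrn j (mem_range.mp hj)).1)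
    constructor
    · have hdiff : ∑ j ∈ range nc, (A r j * dcsYp k ystar j - A r j * dcsYpp k ε ystar j)
          ≤ 12*(k:ℝ)*ε := by
        have hpt : ∀ j ∈ range nc, A r j * dcsYp k ystar j - A r j * dcsYpp k ε ystar j
            ≤ 2 * (dcsYp k ystar j - dcsYpp k ε ystar j) := by
          intro j hj
          have hA := hAbd r hrn j (mem_range.mp hj)
          have h1 := hYple j
          nlinarith [hA.1, hA.2]
        calc ∑ j ∈ range nc, (A r j * dcsYp k ystar j - A r j * dcsYpp k ε ystar j)
            ≤ ∑ j ∈ range nc, 2*(dcsYp k ystar j - dcsYpp k ε ystar j) :=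
              Finset.sum_le_sum hpt
          _ ≤ 12*(k:ℝ)*ε := by
            have hL : ∑ j ∈ range nc, 2*(dcsYp k ystar j - dcsYpp k ε ystar j)
                = ∑ i ∈ range k, (2*(dcsYp k ystar (2*i) - dcsYpp k ε ystar (2*i))
                    + 2*(dcsYp k ystar (2*i+1) - dcsYpp k ε ystar (2*i+1)))
                  + ∑ t ∈ range (nc-2*k), 2*(dcsYp k ystar (2*k+t) - dcsYpp k ε ystar (2*k+t)) := by
              conv_lhs => rw [show nc = 2*k+(nc-2*k) by omega]
              rw [DCSproof.split2]
            rw [hL]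
            have hg : ∑ i ∈ range k, (2*(dcsYp k ystar (2*i) - dcsYpp k ε ystar (2*i))
                + 2*(dcsYp k ystar (2*i+1) - dcsYpp k ε ystar (2*i+1)))
                ≤ ∑ _i ∈ range k, 12*ε := by
              apply Finset.sum_le_sum
              intro i _
              linarith [hYpdiff (2*i), hYpdiff (2*i+1)]
            have he : ∑ t ∈ range (nc-2*k), 2*(dcsYp k ystar (2*k+t) - dcsYpp k ε ystar (2*k+t))
                = 0 := by
              apply Finset.sum_eq_zero
              intro t _
              have h1 : dcsYpp k ε ystar (2*k+t) = ystar (3*k+(2*k+t)) :=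
                hYpp_ext (2*k+t) (by omega)
              have h2 : dcsYp k ystar (2*k+t) = ystar (3*k+(2*k+t)) := by
                simp only [dcsYp, if_neg (show ¬ (2*k+t)/2 < k by omega)]
              rw [h1, h2]
              ring
            rw [Finset.sum_const, card_range, nsmul_eq_mul] at hg
            linarith
      rw [Finset.sum_sub_distrib] at hdiff
      linarith
    · exact Finset.sum_le_sum hptub
  have hDbnd : ∀ r, |(if r < k then 2*(ystar (5*r+1) + ystar (5*r+2)) - 2*ystar (5*r) else 0)|
      ≤ 2*ε := by
    intro r
    rw [abs_le]
    split_ifs with h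
    · constructor
      · linarith [hDlb r h]
      · linarith [hDub r h]
    · constructor <;> linarith [hε0]
  -- assemble
  refine ⟨hppos, hYpos, ?_⟩
  unfold IsWSNE
  refine ⟨?_, ?_, ?_, ?_, ?_, ?_, ?_, ?_⟩
  · intro i
    exact div_nonneg (hx0 _) (le_of_lt hppos)
  · intro i hi
    show xstar (4*k+i) / pbar = 0
    rw [hxhi (4*k+i) (by omega), zero_div]
  · show ∑ i ∈ range nr, xstar (4*k+i) / pbar = 1
    rw [← Finset.sum_div]
    exact div_self (ne_of_gt hppos)
  · intro j
    exact div_nonneg (hYppos j) (le_of_lt hYpos)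
  · intro j hj
    show dcsYpp k ε ystar j / Ybar = 0
    rw [hYpp_ext j (by omega), hyhi (3*k+j) (by omega), zero_div]
  · show ∑ j ∈ range nc, dcsYpp k ε ystar j / Ybar = 1
    rw [← Finset.sum_div]
    exact div_self (ne_of_gt hYpos)
  · -- row condition
    intro r hr hxr r' hr'
    show ∑ j ∈ range nc, A r j * (dcsYpp k ε ystar j / Ybar)
      ≥ ∑ j ∈ range nc, A r' j * (dcsYpp k ε ystar j / Ybar) - 1200*(n:ℝ)^2*ε
    have hxr2 : 0 < xstar (4*k+r) / pbar := hxr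
    clear hxr
    have hxr' : 0 < xstar (4*k+r) := by
      rcases (hx0 (4*k+r)).lt_or_eq with h | h
      · exact h
      · exfalso
        rw [← h, zero_div] at hxr2
        exact lt_irrefl 0 hxr2
    have hRAc := hrowRA (4*k+r) (by omega) hxr' (4*k+r') (by omega)
    have hSr := hSid r hr
    have hSr' := hSid r' hr'
    have htr := htrim r hr
    have htr' := htrim r' hr'
    have hDr := abs_le.mp (hDbnd r)
    have hDr' := abs_le.mp (hDbnd r')
    have hgoal_rw : ∀ rr, ∑ j ∈ range nc, A rr j * (dcsYpp k ε ystar j / Ybar)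
        = (∑ j ∈ range nc, A rr j * dcsYpp k ε ystar j)/Ybar := by
      intro rr
      rw [Finset.sum_div]
      exact Finset.sum_congr rfl fun j _ => by rw [mul_div_assoc]
    have hkey : (∑ j ∈ range nc, A r' j * dcsYpp k ε ystar j) - (1200*(n:ℝ)^2*ε) * Ybar
        ≤ ∑ j ∈ range nc, A r j * dcsYpp k ε ystar j := by
      have hδY : (12*(k:ℝ)+5)*ε ≤ (1200*(n:ℝ)^2*ε) * Ybar := by
        have h1 : (1200*(n:ℝ)^2*ε) * (1/(10*(n:ℝ))) ≤ (1200*(n:ℝ)^2*ε) * Ybar :=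
          mul_le_mul_of_nonneg_left hY10 (by positivity)
        have h2 : (1200*(n:ℝ)^2*ε) * (1/(10*(n:ℝ))) = 120*((n:ℝ)*ε) := by
          field_simp
          ring
        have h3 : (12*(k:ℝ)+5)*ε ≤ 120*((n:ℝ)*ε) := by
          linarith [hknε, mul_nonneg (sub_nonneg.mpr hn1) hε0]
        linarith
      linarith [hRAc, hSr, hSr', htr.1, htr'.2, hDr.1, hDr.2, hDr'.1, hDr'.2, hδY]
    rw [hgoal_rw r, hgoal_rw r', ge_iff_le,
      show (∑ j ∈ range nc, A r' j * dcsYpp k ε ystar j)/Ybar - 1200*(n:ℝ)^2*ε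
        = ((∑ j ∈ range nc, A r' j * dcsYpp k ε ystar j) - (1200*(n:ℝ)^2*ε) * Ybar)/Ybar from by
          field_simp <;> ring]
    exact div_le_div_of_nonneg_right hkey hYpos.le
  · -- column condition
    intro j hj hyj j' hj'
    show ∑ i ∈ range nr, xstar (4*k+i) / pbar * B i j
      ≥ ∑ i ∈ range nr, xstar (4*k+i) / pbar * B i j' - 1200*(n:ℝ)^2*ε
    have hyj2 : 0 < dcsYpp k ε ystar j / Ybar := hyj
    clear hyj
    have hyj' : 0 < dcsYpp k ε ystar j := by
      rcases (hYppos j).lt_or_eq with h | h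
      · exact h
      · exfalso
        rw [← h, zero_div] at hyj2
        exact lt_irrefl 0 hyj2
    have hmain := hcolmain j hj hyj' j' hj'
    have hgoal_rw : ∀ jj, ∑ i ∈ range nr, xstar (4*k+i) / pbar * B i jj = pB jj / pbar := by
      intro jj
      rw [hpB_def, Finset.sum_div]
      exact Finset.sum_congr rfl fun t _ => by rw [div_mul_eq_mul_div]
    have hkey : pB j' - (1200*(n:ℝ)^2*ε) * pbar ≤ pB j := by
      have hδp : ε ≤ (1200*(n:ℝ)^2*ε) * pbar := by
        have h1 : (1200*(n:ℝ)^2*ε) * (1/(8*(n:ℝ))) ≤ (1200*(n:ℝ)^2*ε) * pbar :=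
          mul_le_mul_of_nonneg_left hp8 (by positivity)
        have h2 : (1200*(n:ℝ)^2*ε) * (1/(8*(n:ℝ))) = 150*((n:ℝ)*ε) := by
          field_simp
          ring
        linarith [h1, h2, mul_nonneg (sub_nonneg.mpr hn1) hε0,
          mul_nonneg (Nat.cast_nonneg n : (0:ℝ) ≤ (n:ℝ)) hε0]
      linarith
    rw [hgoal_rw j, hgoal_rw j', ge_iff_le,
      show pB j' / pbar - 1200*(n:ℝ)^2*ε = (pB j' - (1200*(n:ℝ)^2*ε) * pbar)/pbar from by
        field_simp <;> ring]
    exact div_le_div_of_nonneg_right hkey hppos.le
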